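/- arXiv:2111.11275 — 2 statements merged into one kernel-verified Lean document; each statement's English description precedes it below -/
import Mathlib

section
/- Every maximally commutative subset C of ℤ_d × ℤ_d equals either C_{0,0} := {(0,y) : y ∈ ℤ_d} or C_{i,j} := {(x,y) : iy − jx ≡ 0 (mod d), x ∈ iℤ_d} for some nonzero i dividing d and some 0 ≤ j < d/i. -/
/-- The set `C_{i,j} = {(x,y) ∈ ℤ_d × ℤ_d : i y − j x ≡ 0 (mod d), x ∈ iℤ_d}`. -/
def Cij {d : ℕ} (i j : ZMod d) : Set (ZMod d × ZMod d) :=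
  {p | i * p.2 - j * p.1 = 0 ∧ ∃ k : ZMod d, p.1 = i * k}

/-- Maximal commutativity for subsets of `ℤ_d × ℤ_d`. -/
def IsMaxComm {d : ℕ} (C : Set (ZMod d × ZMod d)) : Prop :=
  (∀ p ∈ C, ∀ q ∈ C, p.1 * q.2 - q.1 * p.2 = 0) ∧
  (∀ p : ZMod d × ZMod d, (∀ q ∈ C, p.1 * q.2 - q.1 * p.2 = 0) → p ∈ C)

/-!
A maximally commutative set `C` is closed under `ℤ_d`-linear combinations, since the
commutation form is bilinear. Hence the naturals `n` with `(n, y) ∈ C` for some `y` are closed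
under `gcd` (Bézout), so the least positive one, `i`, divides all of them, `d` included. Fixing
`(i, y₀) ∈ C` and reducing `y₀` modulo `d / i` to `j`, commutation with `(i, y₀)` puts `C` inside
`C_{i,j}`, which is itself commutative; maximality forces equality.
-/

lemma Nat.dvd_of_gcd_mem {S : Set ℕ} (hS : ∀ a ∈ S, ∀ b ∈ S, Nat.gcd a b ∈ S)
    {i : ℕ} (hi : 0 < i) (hiS : i ∈ S) (hmin : ∀ n ∈ S, 0 < n → i ≤ n)
    {m : ℕ} (hm : m ∈ S) : i ∣ m := by
  have hle : i ≤ Nat.gcd i m := hmin _ (hS i hiS m hm) (Nat.gcd_pos_of_pos_left m hi)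
  have hgcd : Nat.gcd i m = i := le_antisymm (Nat.le_of_dvd hi (Nat.gcd_dvd_left i m)) hle
  exact hgcd ▸ Nat.gcd_dvd_right i m

namespace ZMod

variable {d : ℕ}

lemma natCast_gcd_eq (a b : ℕ) :
    ∃ A B : ZMod d, ((Nat.gcd a b : ℕ) : ZMod d) = A * a + B * b := by
  refine ⟨Nat.gcdA a b, Nat.gcdB a b, ?_⟩
  have h := congrArg (Int.cast (R := ZMod d)) (Nat.gcd_eq_gcd_ab a b)
  push_cast at h
  linear_combination h

lemma exists_eq_natCast_mul_of_dvd_val [NeZero d] {i : ℕ} {x : ZMod d} (h : i ∣ x.val) :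
    ∃ k : ZMod d, x = i * k := by
  obtain ⟨k, hk⟩ := h
  exact ⟨k, by rw [← Nat.cast_mul, ← hk, natCast_zmod_val]⟩

lemma natCast_mul_eq_natCast_mul_val_mod [NeZero d] {i : ℕ} (hi : i ∣ d) (y : ZMod d) :
    (i : ZMod d) * y = i * ((y.val % (d / i) : ℕ) : ZMod d) := by
  have h : i * y.val = d * (y.val / (d / i)) + i * (y.val % (d / i)) :=
    calc i * y.val = i * (d / i * (y.val / (d / i)) + y.val % (d / i)) := by
          rw [Nat.div_add_mod]
      _ = i * (d / i) * (y.val / (d / i)) + i * (y.val % (d / i)) := by ring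
      _ = d * (y.val / (d / i)) + i * (y.val % (d / i)) := by rw [Nat.mul_div_cancel' hi]
  have := congrArg (Nat.cast (R := ZMod d)) h
  push_cast at this
  rwa [natCast_zmod_val, natCast_self, zero_mul, zero_add] at this

end ZMod

lemma Cij_pairwise_comm {d : ℕ} (i j : ZMod d) :
    ∀ p ∈ Cij i j, ∀ q ∈ Cij i j, p.1 * q.2 - q.1 * p.2 = 0 := by
  rintro p ⟨hp, k, hk⟩ q ⟨hq, m, hm⟩
  linear_combination k * hq - m * hp + (q.2 - j * m) * hk - (p.2 - j * k) * hm

namespace IsMaxComm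

variable {d : ℕ} {C : Set (ZMod d × ZMod d)}

lemma smul_add_smul_mem (hC : IsMaxComm C) {p q : ZMod d × ZMod d} (hp : p ∈ C) (hq : q ∈ C)
    (a b : ZMod d) : a • p + b • q ∈ C :=
  hC.2 _ fun r hr => by
    simp only [Prod.fst_add, Prod.snd_add, Prod.smul_fst, Prod.smul_snd, smul_eq_mul]
    linear_combination a * hC.1 p hp r hr + b * hC.1 q hq r hr

lemma zero_mem (hC : IsMaxComm C) : (0 : ZMod d × ZMod d) ∈ C :=
  hC.2 0 fun q _ => by simp

lemma eq_of_subset (hC : IsMaxComm C) {D : Set (ZMod d × ZMod d)} (hCD : C ⊆ D)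
    (hD : ∀ p ∈ D, ∀ q ∈ D, p.1 * q.2 - q.1 * p.2 = 0) : C = D :=
  hCD.antisymm fun p hp => hC.2 p fun q hq => hD p hp q (hCD hq)

def fstNat (C : Set (ZMod d × ZMod d)) : Set ℕ := {n | ∃ y, ((n : ZMod d), y) ∈ C}

lemma val_fst_mem_fstNat [NeZero d] {p : ZMod d × ZMod d} (hp : p ∈ C) : p.1.val ∈ fstNat C :=
  ⟨p.2, by rwa [ZMod.natCast_zmod_val]⟩

lemma gcd_mem_fstNat (hC : IsMaxComm C) :
    ∀ a ∈ fstNat C, ∀ b ∈ fstNat C, Nat.gcd a b ∈ fstNat C := by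
  rintro a ⟨y, hy⟩ b ⟨z, hz⟩
  obtain ⟨A, B, hAB⟩ := ZMod.natCast_gcd_eq (d := d) a b
  refine ⟨A * y + B * z, ?_⟩
  simpa [hAB] using hC.smul_add_smul_mem hy hz A B

lemma self_mem_fstNat (hC : IsMaxComm C) : d ∈ fstNat C :=
  ⟨0, by rw [ZMod.natCast_self]; exact hC.zero_mem⟩

lemma subset_Cij (hC : IsMaxComm C) {i j y₀ : ZMod d} (hy₀ : (i, y₀) ∈ C)
    (hj : i * y₀ = i * j) (hfst : ∀ q ∈ C, ∃ k, q.1 = i * k) : C ⊆ Cij i j := by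
  intro q hq
  obtain ⟨k, hk⟩ := hfst q hq
  refine ⟨?_, k, hk⟩
  linear_combination -hC.1 q hq (i, y₀) hy₀ + k * hj + (y₀ - j) * hk

end IsMaxComm

/-- Every maximally commutative subset of `ℤ_d × ℤ_d` is `C_{0,0} = {(0,y)}` or
`C_{i,j}` for some nonzero divisor `i` of `d` and `0 ≤ j < d/i`. -/
theorem maxComm_structure (d : ℕ) (hd : 3 ≤ d)
    (C : Set (ZMod d × ZMod d)) (hC : IsMaxComm C) :
    C = {p : ZMod d × ZMod d | p.1 = 0} ∨
      ∃ i j : ℕ, i ∣ d ∧ 0 < i ∧ i < d ∧ j < d / i ∧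
        C = Cij (i : ZMod d) (j : ZMod d) := by
  have : NeZero d := ⟨by omega⟩
  by_cases h0 : ∀ p ∈ C, p.1 = 0
  · refine .inl (hC.eq_of_subset h0 fun p hp q hq => ?_)
    simp [show p.1 = 0 from hp, show q.1 = 0 from hq]
  push Not at h0
  obtain ⟨p₀, hp₀, hp₀1⟩ := h0
  have hex : ∃ n, 0 < n ∧ n ∈ IsMaxComm.fstNat C :=
    ⟨_, ZMod.val_pos.2 hp₀1, IsMaxComm.val_fst_mem_fstNat hp₀⟩
  classical
  set i := Nat.find hex
  obtain ⟨hi, y₀, hy₀⟩ : 0 < i ∧ i ∈ IsMaxComm.fstNat C := Nat.find_spec hex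
  have hmin : ∀ n ∈ IsMaxComm.fstNat C, 0 < n → i ≤ n := fun n hn hn0 =>
    Nat.find_min' hex ⟨hn0, hn⟩
  have hdvd : ∀ m ∈ IsMaxComm.fstNat C, i ∣ m := fun m =>
    Nat.dvd_of_gcd_mem hC.gcd_mem_fstNat hi ⟨y₀, hy₀⟩ hmin
  have hid : i ∣ d := hdvd d hC.self_mem_fstNat
  have hilt : i < d :=
    (hmin _ (IsMaxComm.val_fst_mem_fstNat hp₀) (ZMod.val_pos.2 hp₀1)).trans_lt (ZMod.val_lt _)
  have hj : y₀.val % (d / i) < d / i :=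
    Nat.mod_lt _ (Nat.div_pos (Nat.le_of_dvd (by omega) hid) hi)
  refine .inr ⟨i, _, hid, hi, hilt, hj, hC.eq_of_subset ?_ (Cij_pairwise_comm _ _)⟩
  exact hC.subset_Cij hy₀ (ZMod.natCast_mul_eq_natCast_mul_val_mod hid y₀) fun q hq =>
    ZMod.exists_eq_natCast_mul_of_dvd_val (hdvd _ (IsMaxComm.val_fst_mem_fstNat hq))
end

section
/- The number of maximally commutative subsets of ℤ_d × ℤ_d (under the relation mn' − m'n ≡ 0 mod d) is exactly σ(d), the sum of the divisors of d. -/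
open Finset

namespace ZMod

variable {d e : ℕ}

theorem natCast_mul_natCast_div_self (he : e ∣ d) :
    (e : ZMod d) * ((d / e : ℕ) : ZMod d) = 0 := by
  rw [← Nat.cast_mul, Nat.mul_div_cancel' he, natCast_self]

variable [NeZero d]

theorem natCast_dvd_iff_mul_eq_zero (he : e ∣ d) (x : ZMod d) :
    (e : ZMod d) ∣ x ↔ x * ((d / e : ℕ) : ZMod d) = 0 := by
  obtain ⟨f, rfl⟩ := he
  have hf : 0 < f := Nat.pos_of_mul_pos_left (NeZero.pos (e * f))
  rw [Nat.mul_div_cancel_left f (Nat.pos_of_mul_pos_right (NeZero.pos (e * f)))]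
  constructor
  · rintro ⟨k, rfl⟩
    rw [mul_right_comm, ← Nat.cast_mul, natCast_self, zero_mul]
  · intro h
    rw [← natCast_zmod_val x, ← Nat.cast_mul, natCast_eq_zero_iff,
      Nat.mul_dvd_mul_iff_right hf] at h
    rw [← natCast_zmod_val x]
    exact Nat.cast_dvd_cast h

theorem natCast_dvd_natCast_iff_of_dvd (he : e ∣ d) (n : ℕ) :
    (e : ZMod d) ∣ (n : ZMod d) ↔ e ∣ n := by
  rw [natCast_dvd_iff_mul_eq_zero he, ← Nat.cast_mul, natCast_eq_zero_iff]
  obtain ⟨f, rfl⟩ := he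
  rw [Nat.mul_div_cancel_left f (Nat.pos_of_mul_pos_right (NeZero.pos (e * f))),
    Nat.mul_dvd_mul_iff_right (Nat.pos_of_mul_pos_left (NeZero.pos (e * f)))]

end ZMod

def commutant {R : Type*} [CommRing R] (S : Set (R × R)) : Submodule R (R × R) where
  carrier := {p | ∀ q ∈ S, p.1 * q.2 - q.1 * p.2 = 0}
  zero_mem' q _ := by simp
  add_mem' {p p'} hp hp' q hq := by
    simp only [Prod.fst_add, Prod.snd_add]
    linear_combination hp q hq + hp' q hq
  smul_mem' c p hp q hq := by
    simp only [Prod.smul_fst, Prod.smul_snd, smul_eq_mul]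
    linear_combination c * hp q hq

variable {d : ℕ}

theorem IsMaxComm.commutant_eq {C : Set (ZMod d × ZMod d)} (hC : IsMaxComm C) :
    (commutant C : Set (ZMod d × ZMod d)) = C :=
  Set.Subset.antisymm hC.2 fun p hp q hq => hC.1 p hp q hq

theorem mk_mem_Cij (i j : ZMod d) : (i, j) ∈ Cij i j :=
  ⟨by ring, dvd_refl i⟩

theorem Cij_eq_of_mul_eq {i j j' : ZMod d} (h : i * j = i * j') : Cij i j = Cij i j' := by
  ext p
  constructor <;> rintro ⟨h1, k, hk⟩ <;> refine ⟨?_, k, hk⟩ <;> rw [hk] at h1 ⊢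
  · linear_combination h1 + k * h
  · linear_combination h1 - k * h

theorem IsMaxComm.exists_eq_Cij {C : Set (ZMod d × ZMod d)} (hC : IsMaxComm C) :
    ∃ e, e ∣ d ∧ ∃ y, C = Cij (e : ZMod d) y := by
  obtain ⟨M, rfl⟩ : ∃ M : Submodule (ZMod d) (ZMod d × ZMod d), (M : Set _) = C :=
    ⟨_, hC.commutant_eq⟩
  -- the integers lifting first coordinates of `C` form a subgroup `e ℤ` of `ℤ`
  let H : AddSubgroup ℤ :=
    (M.map (LinearMap.fst (ZMod d) (ZMod d) (ZMod d))).toAddSubgroup.comap (Int.castAddHom _)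
  obtain ⟨a, ha⟩ := Int.subgroup_cyclic H
  set e := a.natAbs
  have hH : ∀ n : ℤ, (∃ y, ((n : ZMod d), y) ∈ M) ↔ (e : ℤ) ∣ n := by
    intro n
    rw [Int.natCast_natAbs, abs_dvd, ← Int.mem_zmultiples_iff, AddSubgroup.zmultiples_eq_closure,
      ← ha]
    simp [H]
  have he : e ∣ d := by
    rw [← Int.natCast_dvd_natCast, ← hH]
    exact ⟨0, by rw [Int.cast_natCast, ZMod.natCast_self]; exact M.zero_mem⟩
  obtain ⟨y, hy⟩ := (hH e).mpr dvd_rfl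
  push_cast at hy
  have hfst : ∀ p ∈ M, (e : ZMod d) ∣ p.1 := by
    intro p hp
    have := Int.cast_dvd_cast (α := ZMod d) _ _
      ((hH _).mp ⟨p.2, by rwa [ZMod.intCast_zmod_cast]⟩)
    rwa [Int.cast_natCast, ZMod.intCast_zmod_cast] at this
  refine ⟨e, he, y, Set.ext fun p =>
    ⟨fun hp => ⟨?_, hfst p hp⟩, fun ⟨hpy, k, hk⟩ => ?_⟩⟩
  · linear_combination -hC.1 p hp _ hy
  · refine hC.2 p fun q hq => ?_
    obtain ⟨m, hm⟩ := hfst q hq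
    linear_combination (q.2 - m * y) * hk - (p.2 - k * y) * hm - k * hC.1 q hq _ hy - m * hpy

variable [NeZero d]

theorem isMaxComm_Cij {e : ℕ} (he : e ∣ d) (j : ZMod d) :
    IsMaxComm (Cij (e : ZMod d) j) := by
  refine ⟨fun p ⟨hp, k, hk⟩ q ⟨hq, k', hk'⟩ => ?_, fun p hp => ?_⟩
  · linear_combination (q.2 - k' * j) * hk - (p.2 - k * j) * hk' + k * hq - k' * hp
  · have hf : ((0 : ZMod d), ((d / e : ℕ) : ZMod d)) ∈ Cij (e : ZMod d) j :=
      ⟨by rw [mul_zero, sub_zero, ZMod.natCast_mul_natCast_div_self he], dvd_zero _⟩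
    have h1 := hp _ (mk_mem_Cij _ j)
    have h2 := hp _ hf
    refine ⟨by linear_combination -h1, (ZMod.natCast_dvd_iff_mul_eq_zero he _).mpr ?_⟩
    simpa using h2

theorem exists_lt_Cij_eq {e : ℕ} (he : e ∣ d) (y : ZMod d) :
    ∃ j < d / e, Cij (e : ZMod d) y = Cij (e : ZMod d) j := by
  have hf : 0 < d / e :=
    Nat.div_pos (Nat.le_of_dvd (NeZero.pos d) he) (Nat.pos_of_dvd_of_pos he (NeZero.pos d))
  refine ⟨y.val % (d / e), Nat.mod_lt _ hf, Cij_eq_of_mul_eq ?_⟩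
  have hy : y =
      ((y.val % (d / e) : ℕ) : ZMod d) + ((d / e : ℕ) : ZMod d) * (y.val / (d / e) : ℕ) := by
    rw [← Nat.cast_mul, ← Nat.cast_add, Nat.mod_add_div, ZMod.natCast_zmod_val]
  nth_rewrite 1 [hy]
  linear_combination ((y.val / (d / e) : ℕ) : ZMod d) * ZMod.natCast_mul_natCast_div_self he

theorem Cij_injOn :
    Set.InjOn (fun p : (_ : ℕ) × ℕ => Cij (p.1 : ZMod d) (p.2 : ZMod d))
      (d.divisors.sigma fun e => range (d / e)) := by
  rintro ⟨e, j⟩ hej ⟨e', j'⟩ hej' h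
  simp only [coe_sigma, Set.mem_sigma_iff, mem_coe, Nat.mem_divisors, mem_range] at hej hej' h
  have mem_of_eq : ∀ {e e' j j' : ℕ}, Cij (e : ZMod d) (j : ZMod d) = Cij (e' : ZMod d) j' →
      ((e' : ZMod d), (j' : ZMod d)) ∈ Cij (e : ZMod d) (j : ZMod d) :=
    fun h => h ▸ mk_mem_Cij _ _
  have he_dvd : ∀ {e e' j j' : ℕ}, e ∣ d →
      Cij (e : ZMod d) (j : ZMod d) = Cij (e' : ZMod d) j' → e ∣ e' :=
    fun he h => (ZMod.natCast_dvd_natCast_iff_of_dvd he _).mp (mem_of_eq h).2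
  obtain rfl := Nat.dvd_antisymm (he_dvd hej.1.1 h) (he_dvd hej'.1.1 h.symm)
  have he0 : 0 < e := Nat.pos_of_dvd_of_pos hej.1.1 (NeZero.pos d)
  have hmul : ((e * j : ℕ) : ZMod d) = ((e * j' : ℕ) : ZMod d) := by
    push_cast
    linear_combination -(mem_of_eq h).1
  have hlt : ∀ {i}, i < d / e → e * i < d := fun hi =>
    (Nat.mul_lt_mul_left he0).2 hi |>.trans_le (Nat.mul_div_le d e)
  have := congrArg ZMod.val hmul
  rw [ZMod.val_cast_of_lt (hlt hej.2), ZMod.val_cast_of_lt (hlt hej'.2)] at this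
  exact Sigma.ext rfl (heq_of_eq (Nat.eq_of_mul_eq_mul_left he0 this))

theorem setOf_isMaxComm_eq_image :
    {C : Set (ZMod d × ZMod d) | IsMaxComm C} =
      (fun p : (_ : ℕ) × ℕ => Cij (p.1 : ZMod d) (p.2 : ZMod d)) ''
        (d.divisors.sigma fun e => range (d / e)) := by
  ext C
  simp only [Set.mem_ofPred_eq, Set.mem_image, coe_sigma, Set.mem_sigma_iff, mem_coe,
    Nat.mem_divisors, mem_range, Sigma.exists]
  constructor
  · intro hC
    obtain ⟨e, he, y, rfl⟩ := hC.exists_eq_Cij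
    obtain ⟨j, hj, hCj⟩ := exists_lt_Cij_eq he y
    exact ⟨e, j, ⟨⟨he, NeZero.ne d⟩, hj⟩, hCj.symm⟩
  · rintro ⟨e, j, ⟨⟨he, -⟩, -⟩, rfl⟩
    exact isMaxComm_Cij he _

/-- The number of maximally commutative subsets of `ℤ_d × ℤ_d` equals `σ(d)`,
the sum of the divisors of `d`. -/
theorem maxComm_count (d : ℕ) (hd : 3 ≤ d) :
    {C : Set (ZMod d × ZMod d) | IsMaxComm C}.ncard = ∑ k ∈ Nat.divisors d, k := by
  have : NeZero d := ⟨by omega⟩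
  rw [setOf_isMaxComm_eq_image, Cij_injOn.ncard_image, Set.ncard_coe_finset, card_sigma]
  simp only [card_range]
  exact Nat.sum_div_divisors d id
end
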